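/- Let K be a field, H a finite-dimensional K-vector space, N : H → H a nilpotent linear endomorphism, and (Φ_i)_{i∈ℤ} an increasing ℤ-indexed filtration of H by subspaces which is separated (Φ_i = 0 for i sufficiently small) and exhaustive (Φ_i = H for i sufficiently large), such that N(Φ_i) ⊆ Φ_{i+1} for all i. Suppose that for every integer j ≥ 0, range(N^j) ∩ Φ_{i+j} = N^j(Φ_i) for all i ∈ ℤ. Let Gr^Φ H = ⊕_{i∈ℤ} Φ_i/Φ_{i−1}, and let Gr(N) : Gr^Φ H → Gr^Φ H be the graded endomorphism induced by N via the maps Φ_i/Φ_{i−1} → Φ_{i+1}/Φ_i. Then there exists a K-linear isomorphism ψ : H → Gr^Φ H such that ψ(Φ_k) = ⊕_{i ≤ k} Φ_i/Φ_{i−1} for every k ∈ ℤ and ψ ∘ N = Gr(N) ∘ ψ. -/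

import Mathlib

/-!
Strictness lets one split the filtration compatibly with `N`: there are subspaces `V i` with
`Φ i = Φ (i - 1) ⊕ V i` and `N (V i) ⊆ V (i + 1)`, and then `H = ⊕ᵢ V i` together with
`V i ≃ Φ i / Φ (i - 1)` gives `ψ`.

The splitting is built by induction on the dimension, as in the proof of the Jordan normal form.
Take a longest `N`-string `e, N e, …, N ^ m e` starting as low as possible, in `Φ i₀`. By
strictness `N ^ m e ∉ Φ (i₀ + m - 1)`, so some functional `χ` vanishes on `Φ (i₀ + m - 1)` with
`χ (N ^ m e) = 1`, and `x ↦ ∑ₗ χ (N ^ (m - l) x) • N ^ l e` is an `N`-equivariant projection onto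
the string that respects the filtration. Its kernel is again `N`-stable and strict, of smaller
dimension, and the string itself is split by the lines `K ∙ N ^ l e ⊆ Φ (i₀ + l)`.
-/

/-- The `i`-th graded piece `Φ i / Φ (i-1)` of an increasing `ℤ`-indexed
filtration `Φ` by subspaces. -/
def GrPiece {K H : Type*} [Field K] [AddCommGroup H] [Module K H]
    (Φ : ℤ → Submodule K H) (i : ℤ) : Type _ :=
  Φ i ⧸ (Φ (i - 1)).comap (Φ i).subtype

noncomputable instance {K H : Type*} [Field K] [AddCommGroup H] [Module K H]
    (Φ : ℤ → Submodule K H) (i : ℤ) : AddCommGroup (GrPiece Φ i) :=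
  inferInstanceAs (AddCommGroup (Φ i ⧸ (Φ (i - 1)).comap (Φ i).subtype))

noncomputable instance {K H : Type*} [Field K] [AddCommGroup H] [Module K H]
    (Φ : ℤ → Submodule K H) (i : ℤ) : Module K (GrPiece Φ i) :=
  inferInstanceAs (Module K (Φ i ⧸ (Φ (i - 1)).comap (Φ i).subtype))

/-- The associated graded vector space `Gr^Φ H = ⊕_{i ∈ ℤ} Φ i / Φ (i-1)`. -/
abbrev GrMod {K H : Type*} [Field K] [AddCommGroup H] [Module K H]
    (Φ : ℤ → Submodule K H) : Type _ :=
  DirectSum ℤ (GrPiece Φ)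

/-- The map `Φ i / Φ (i-1) → Φ (i+1) / Φ i` induced by an endomorphism `N`
with `N (Φ i) ⊆ Φ (i+1)`. -/
noncomputable def grPieceMap {K H : Type*} [Field K] [AddCommGroup H] [Module K H]
    (N : H →ₗ[K] H) (Φ : ℤ → Submodule K H)
    (hNΦ : ∀ i : ℤ, (Φ i).map N ≤ Φ (i + 1)) (i : ℤ) :
    GrPiece Φ i →ₗ[K] GrPiece Φ (i + 1) :=
  Submodule.mapQ _ _
    (N.restrict (p := Φ i) (q := Φ (i + 1))
      (fun x hx => hNΦ i ⟨x, hx, rfl⟩))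
    (by
      intro x hx
      simp only [Submodule.mem_comap, LinearMap.restrict_apply] at hx ⊢
      have h1 : i + 1 - 1 = i - 1 + 1 := by ring
      rw [h1]
      exact hNΦ (i - 1) ⟨(x : H), hx, rfl⟩)

/-- The graded endomorphism `Gr(N) : Gr^Φ H → Gr^Φ H` induced by `N`, sending
the `i`-th piece to the `(i+1)`-st piece. -/
noncomputable def grN {K H : Type*} [Field K] [AddCommGroup H] [Module K H]
    (N : H →ₗ[K] H) (Φ : ℤ → Submodule K H)
    (hNΦ : ∀ i : ℤ, (Φ i).map N ≤ Φ (i + 1)) :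
    GrMod Φ →ₗ[K] GrMod Φ :=
  DirectSum.toModule K ℤ (GrMod Φ) fun i =>
    (DirectSum.lof K ℤ (GrPiece Φ) (i + 1)).comp (grPieceMap N Φ hNΦ i)

theorem iSupIndep_of_disjoint_iSup_lt {ι α : Type*} [LinearOrder ι] [CompleteLattice α]
    [IsModularLattice α] [IsCompactlyGenerated α] {t : ι → α}
    (h : ∀ i, Disjoint (t i) (⨆ j < i, t j)) : iSupIndep t := by
  classical
  refine iSupIndep_iff_supIndep.2 fun s => ?_
  induction s using Finset.induction_on_max with
  | empty => exact Finset.supIndep_empty t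
  | insert i s hlt ih =>
    exact ih.insert <| (h i).mono_right <| Finset.sup_le fun j hj => le_biSup t (hlt j hj)

section Splitting

variable {K H : Type*} [Field K] [AddCommGroup H] [Module K H]

theorem pow_apply_mem_of_map_le {N : H →ₗ[K] H} {Φ : ℤ → Submodule K H}
    (hNΦ : ∀ i : ℤ, (Φ i).map N ≤ Φ (i + 1)) (j : ℕ) {k : ℤ} {x : H} (hx : x ∈ Φ k) :
    (N ^ j) x ∈ Φ (k + j) := by
  induction j with
  | zero => simpa using hx
  | succ j ih =>
    rw [pow_succ', Module.End.mul_apply, Nat.cast_succ, ← add_assoc]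
    exact hNΦ _ (Submodule.mem_map_of_mem ih)

variable (N : H →ₗ[K] H) (Φ : ℤ → Submodule K H)

def IsStrictOn (P : Submodule K H) : Prop :=
  ∀ (j : ℕ) (i : ℤ), P.map (N ^ j) ⊓ Φ (i + j) ≤ (Φ i ⊓ P).map (N ^ j)

structure IsCompatibleSplitting (P : Submodule K H) (V : ℤ → Submodule K H) : Prop where
  le : ∀ i, V i ≤ Φ i ⊓ P
  map_le : ∀ i, (V i).map N ≤ V (i + 1)
  le_sup : ∀ i, Φ i ⊓ P ≤ Φ (i - 1) ⊔ V i
  disjoint : ∀ i, Disjoint (V i) (Φ (i - 1))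

structure IsCompatibleProj (P : Submodule K H) (π : H →ₗ[K] H) : Prop where
  idem : IsIdempotentElem π
  range_le : LinearMap.range π ≤ P
  commute : ∀ x ∈ P, π (N x) = N (π x)
  map_le : ∀ i, (Φ i).map π ≤ Φ i

variable {N Φ} {P : Submodule K H} {π : H →ₗ[K] H}

namespace IsCompatibleProj

theorem sub_apply_mem_ker (hπ : IsCompatibleProj N Φ P π) (x : H) :
    x - π x ∈ LinearMap.ker π := by
  rw [LinearMap.mem_ker, map_sub, ← Module.End.mul_apply, hπ.idem.eq, sub_self]

theorem pow_comm_apply (hπ : IsCompatibleProj N Φ P π) (hP : ∀ x ∈ P, N x ∈ P) (j : ℕ) :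
    ∀ x ∈ P, π ((N ^ j) x) = (N ^ j) (π x) := by
  induction j with
  | zero => simp
  | succ j ih =>
    intro x hx
    rw [pow_succ, Module.End.mul_apply, Module.End.mul_apply, ih _ (hP x hx), hπ.commute x hx]

theorem apply_mem_inf_ker (hπ : IsCompatibleProj N Φ P π) (hP : ∀ x ∈ P, N x ∈ P) :
    ∀ x ∈ P ⊓ LinearMap.ker π, N x ∈ P ⊓ LinearMap.ker π := by
  rintro x ⟨hxP, hxπ⟩
  refine ⟨hP x hxP, ?_⟩
  rw [SetLike.mem_coe, LinearMap.mem_ker] at hxπ ⊢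
  rw [hπ.commute x hxP, hxπ, map_zero]

theorem isStrictOn_inf_ker (hπ : IsCompatibleProj N Φ P π) (hP : ∀ x ∈ P, N x ∈ P)
    (hstrict : IsStrictOn N Φ P) : IsStrictOn N Φ (P ⊓ LinearMap.ker π) := by
  rintro j i _ ⟨⟨u, ⟨huP, hu⟩, rfl⟩, hx⟩
  obtain ⟨w, ⟨hwΦ, hwP⟩, hw⟩ := hstrict j i ⟨Submodule.mem_map_of_mem huP, hx⟩
  refine ⟨w - π w, ⟨sub_mem hwΦ (hπ.map_le i (Submodule.mem_map_of_mem hwΦ)),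
    sub_mem hwP (hπ.range_le (LinearMap.mem_range_self π w)), hπ.sub_apply_mem_ker w⟩, ?_⟩
  rw [map_sub, ← hπ.pow_comm_apply hP j w hwP, hw, hπ.pow_comm_apply hP j u huP,
    LinearMap.mem_ker.mp hu, map_zero, sub_zero]

theorem isCompatibleSplitting_sup (hπ : IsCompatibleProj N Φ P π) {V W : ℤ → Submodule K H}
    (hV : IsCompatibleSplitting N Φ (P ⊓ LinearMap.ker π) V)
    (hW : IsCompatibleSplitting N Φ (LinearMap.range π) W) :
    IsCompatibleSplitting N Φ P fun i => V i ⊔ W i where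
  le i := sup_le ((hV.le i).trans (inf_le_inf_left _ inf_le_left))
    ((hW.le i).trans (inf_le_inf_left _ hπ.range_le))
  map_le i := by
    rw [Submodule.map_sup]
    exact sup_le_sup (hV.map_le i) (hW.map_le i)
  le_sup i := by
    rintro x ⟨hxΦ, hxP⟩
    have hπx : π x ∈ Φ (i - 1) ⊔ W i :=
      hW.le_sup i ⟨hπ.map_le i (Submodule.mem_map_of_mem hxΦ), LinearMap.mem_range_self π x⟩
    have hx' : x - π x ∈ Φ (i - 1) ⊔ V i :=
      hV.le_sup i ⟨sub_mem hxΦ (hπ.map_le i (Submodule.mem_map_of_mem hxΦ)),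
        sub_mem hxP (hπ.range_le (LinearMap.mem_range_self π x)), hπ.sub_apply_mem_ker x⟩
    rw [← sub_add_cancel x (π x)]
    exact add_mem (sup_le_sup_left (le_sup_left : V i ≤ V i ⊔ W i) _ hx')
      (sup_le_sup_left (le_sup_right : W i ≤ V i ⊔ W i) _ hπx)
  disjoint i := by
    rw [Submodule.disjoint_def]
    intro x hx hxΦ
    obtain ⟨v, hv, w, hw, rfl⟩ := Submodule.mem_sup.mp hx
    have hπv : π v = 0 := (hV.le i hv).2.2
    have hπw : π w = w := (LinearMap.IsIdempotentElem.mem_range_iff hπ.idem).mp (hW.le i hw).2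
    have hwΦ : w ∈ Φ (i - 1) := by
      simpa [hπv, hπw] using hπ.map_le (i - 1) (Submodule.mem_map_of_mem hxΦ)
    obtain rfl : w = 0 := Submodule.disjoint_def.mp (hW.disjoint i) w hw hwΦ
    rw [add_zero] at hxΦ ⊢
    exact Submodule.disjoint_def.mp (hV.disjoint i) v hv hxΦ

end IsCompatibleProj
end Splitting

section Chain

variable {K H : Type*} [Field K] [AddCommGroup H] [Module K H]
  (N : H →ₗ[K] H) (Φ : ℤ → Submodule K H)

noncomputable def chainProj (χ : H →ₗ[K] K) (e : H) (m : ℕ) : H →ₗ[K] H :=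
  ∑ l ∈ Finset.range (m + 1), (χ ∘ₗ N ^ (m - l)).smulRight ((N ^ l) e)

noncomputable def chainPiece (e : H) (i₀ k : ℤ) : Submodule K H :=
  if i₀ ≤ k then K ∙ (N ^ (k - i₀).toNat) e else ⊥

/-- The vector `e ∈ Φ i₀` starts a chain `e, N e, …, N ^ m e` killed by `N ^ (m + 1)`, whose
top is detected by `χ` modulo `Φ (i₀ + m - 1)`. -/
structure IsChainDual (χ : H →ₗ[K] K) (e : H) (i₀ : ℤ) (m : ℕ) : Prop where
  mem : e ∈ Φ i₀
  pow_succ_apply : (N ^ (m + 1)) e = 0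
  apply_pow : χ ((N ^ m) e) = 1
  le_ker : Φ (i₀ + m - 1) ≤ LinearMap.ker χ

variable {N Φ} {χ : H →ₗ[K] K} {e : H} {i₀ : ℤ} {m : ℕ}

theorem chainProj_apply (x : H) :
    chainProj N χ e m x = ∑ l ∈ Finset.range (m + 1), χ ((N ^ (m - l)) x) • (N ^ l) e := by
  simp [chainProj]

namespace IsChainDual

theorem apply_pow_eq (hc : IsChainDual N Φ χ e i₀ m) (hmono : Monotone Φ)
    (hNΦ : ∀ i : ℤ, (Φ i).map N ≤ Φ (i + 1)) (l : ℕ) :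
    χ ((N ^ l) e) = if l = m then 1 else 0 := by
  rcases lt_trichotomy l m with hl | rfl | hl
  · rw [if_neg hl.ne]
    exact LinearMap.mem_ker.mp (hc.le_ker (hmono (by omega) (pow_apply_mem_of_map_le hNΦ l hc.mem)))
  · rw [if_pos rfl, hc.apply_pow]
  · rw [if_neg hl.ne', Module.End.pow_map_zero_of_le hl hc.pow_succ_apply, map_zero]

theorem chainProj_pow_apply (hc : IsChainDual N Φ χ e i₀ m) (hmono : Monotone Φ)
    (hNΦ : ∀ i : ℤ, (Φ i).map N ≤ Φ (i + 1)) (l : ℕ) :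
    chainProj N χ e m ((N ^ l) e) = (N ^ l) e := by
  simp_rw [chainProj_apply, ← Module.End.mul_apply, ← pow_add, hc.apply_pow_eq hmono hNΦ]
  have key : ∀ l' ∈ Finset.range (m + 1),
      (if m - l' + l = m then (1 : K) else 0) • (N ^ l') e = if l = l' then (N ^ l) e else 0 := by
    intro l' hl'
    have : m - l' + l = m ↔ l = l' := by have := Finset.mem_range.mp hl'; omega
    by_cases h : l = l'
    · rw [if_pos (this.mpr h), if_pos h, one_smul, h]
    · rw [if_neg (mt this.mp h), if_neg h, zero_smul]
  rw [Finset.sum_congr rfl key, Finset.sum_ite_eq]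
  split_ifs with hl
  · rfl
  · rw [Module.End.pow_map_zero_of_le (by simpa using hl) hc.pow_succ_apply]

theorem isIdempotentElem_chainProj (hc : IsChainDual N Φ χ e i₀ m) (hmono : Monotone Φ)
    (hNΦ : ∀ i : ℤ, (Φ i).map N ≤ Φ (i + 1)) : IsIdempotentElem (chainProj N χ e m) := by
  refine LinearMap.ext fun x => ?_
  rw [Module.End.mul_apply, chainProj_apply x, map_sum]
  simp_rw [map_smul, hc.chainProj_pow_apply hmono hNΦ]

theorem chainProj_apply_mem (hc : IsChainDual N Φ χ e i₀ m) (hmono : Monotone Φ)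
    (hNΦ : ∀ i : ℤ, (Φ i).map N ≤ Φ (i + 1)) {k : ℤ} {x : H} (hx : x ∈ Φ k) :
    chainProj N χ e m x ∈ Φ (k - 1) ⊔ chainPiece N e i₀ k := by
  rw [chainProj_apply]
  refine Submodule.sum_mem _ fun l hl => ?_
  rcases lt_trichotomy (i₀ + l) k with hlt | rfl | hgt
  · exact Submodule.mem_sup_left <| Submodule.smul_mem _ _ <|
      hmono (by omega) (pow_apply_mem_of_map_le hNΦ l hc.mem)
  · refine Submodule.mem_sup_right ?_
    rw [chainPiece, if_pos (by omega), show (i₀ + l - i₀).toNat = l by omega]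
    exact Submodule.smul_mem _ _ (Submodule.mem_span_singleton_self _)
  · have hm : l ≤ m := Nat.lt_succ_iff.mp (Finset.mem_range.mp hl)
    rw [LinearMap.mem_ker.mp (hc.le_ker (hmono (by omega) (pow_apply_mem_of_map_le hNΦ (m - l) hx))),
      zero_smul]
    exact Submodule.zero_mem _

theorem chainProj_comm_apply (hc : IsChainDual N Φ χ e i₀ m) {x : H}
    (hx : (N ^ (m + 1)) x = 0) : chainProj N χ e m (N x) = N (chainProj N χ e m x) := by
  -- after reindexing, the two sums differ by boundary terms killed by `N ^ (m + 1)`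
  rw [chainProj_apply, chainProj_apply, map_sum, Finset.sum_range_succ', Finset.sum_range_succ,
    Nat.sub_zero, ← Module.End.mul_apply, ← pow_succ, hx, map_zero, zero_smul, add_zero,
    Nat.sub_self, map_smul, ← Module.End.mul_apply, ← pow_succ', hc.pow_succ_apply, smul_zero,
    add_zero]
  refine Finset.sum_congr rfl fun l hl => ?_
  have hl : l < m := Finset.mem_range.mp hl
  rw [← Module.End.mul_apply, ← pow_succ, show m - (l + 1) + 1 = m - l by omega, map_smul,
    ← Module.End.mul_apply, ← pow_succ']

theorem pow_apply_eq_zero_of_mem (hc : IsChainDual N Φ χ e i₀ m) (hmono : Monotone Φ)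
    (hNΦ : ∀ i : ℤ, (Φ i).map N ≤ Φ (i + 1)) {l : ℕ} (hl : (N ^ l) e ∈ Φ (i₀ + l - 1)) :
    (N ^ l) e = 0 := by
  by_cases hlm : l ≤ m
  · have h := pow_apply_mem_of_map_le hNΦ (m - l) hl
    rw [← Module.End.mul_apply, ← pow_add, Nat.sub_add_cancel hlm] at h
    have h0 := LinearMap.mem_ker.mp (hc.le_ker (hmono (by omega) h))
    rw [hc.apply_pow] at h0
    exact absurd h0 one_ne_zero
  · exact Module.End.pow_map_zero_of_le (by omega) hc.pow_succ_apply

theorem isCompatibleSplitting_chainPiece (hc : IsChainDual N Φ χ e i₀ m) (hmono : Monotone Φ)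
    (hNΦ : ∀ i : ℤ, (Φ i).map N ≤ Φ (i + 1)) :
    IsCompatibleSplitting N Φ (LinearMap.range (chainProj N χ e m)) (chainPiece N e i₀) where
  le k := by
    rw [chainPiece]
    split_ifs with hk
    · rw [Submodule.span_singleton_le_iff_mem]
      refine ⟨?_, hc.chainProj_pow_apply hmono hNΦ _ ▸ LinearMap.mem_range_self _ _⟩
      simpa [hk] using pow_apply_mem_of_map_le hNΦ (k - i₀).toNat hc.mem
    · exact bot_le
  map_le k := by
    rw [chainPiece, chainPiece]
    split_ifs with hk hk'
    · rw [Submodule.map_span, Set.image_singleton, ← Module.End.mul_apply, ← pow_succ',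
        show (k + 1 - i₀).toNat = (k - i₀).toNat + 1 by omega]
    · omega
    all_goals simp
  le_sup k := by
    rintro x ⟨hxΦ, hx⟩
    rw [← (LinearMap.IsIdempotentElem.mem_range_iff (hc.isIdempotentElem_chainProj hmono hNΦ)).mp hx]
    exact hc.chainProj_apply_mem hmono hNΦ hxΦ
  disjoint k := by
    rw [chainPiece]
    split_ifs with hk
    · rw [disjoint_comm, Submodule.disjoint_span_singleton]
      intro h
      exact hc.pow_apply_eq_zero_of_mem hmono hNΦ (by simpa [hk] using h)
    · exact disjoint_bot_left

theorem isCompatibleProj_chainProj (hc : IsChainDual N Φ χ e i₀ m) (hmono : Monotone Φ)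
    (hNΦ : ∀ i : ℤ, (Φ i).map N ≤ Φ (i + 1)) {P : Submodule K H} (hP : ∀ x ∈ P, N x ∈ P)
    (heP : e ∈ P) (hPm : ∀ x ∈ P, (N ^ (m + 1)) x = 0) :
    IsCompatibleProj N Φ P (chainProj N χ e m) where
  idem := hc.isIdempotentElem_chainProj hmono hNΦ
  range_le := by
    rintro _ ⟨x, rfl⟩
    rw [chainProj_apply]
    exact Submodule.sum_mem _ fun l _ =>
      Submodule.smul_mem _ _ (Module.End.pow_apply_mem_of_forall_mem l hP e heP)
  commute x hx := hc.chainProj_comm_apply (hPm x hx)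
  map_le i := by
    rintro _ ⟨x, hx, rfl⟩
    refine sup_le (hmono (by omega)) ?_ (hc.chainProj_apply_mem hmono hNΦ hx)
    exact ((hc.isCompatibleSplitting_chainPiece hmono hNΦ).le i).trans inf_le_left

end IsChainDual

end Chain

section Existence

variable {K H : Type*} [Field K] [AddCommGroup H] [Module K H]
  {N : H →ₗ[K] H} {Φ : ℤ → Submodule K H} {P : Submodule K H}

theorem exists_pow_succ_apply_eq_zero (hN : IsNilpotent N) (hP : P ≠ ⊥) :
    ∃ m : ℕ, (∀ x ∈ P, (N ^ (m + 1)) x = 0) ∧ ∃ x ∈ P, (N ^ m) x ≠ 0 := by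
  classical
  obtain ⟨n, hn⟩ := hN
  have hex : ∃ n : ℕ, ∀ x ∈ P, (N ^ n) x = 0 := ⟨n, by simp [hn]⟩
  have hpos : Nat.find hex ≠ 0 := by
    intro h0
    obtain ⟨x, hxP, hx⟩ := Submodule.exists_mem_ne_zero_of_ne_bot hP
    exact hx (by simpa [h0] using Nat.find_spec hex x hxP)
  refine ⟨Nat.find hex - 1, ?_, by simpa using Nat.find_min hex (Nat.sub_one_lt hpos)⟩
  simpa [Nat.sub_add_cancel (Nat.pos_of_ne_zero hpos)] using Nat.find_spec hex

theorem exists_mem_pow_apply_notMem (hsep : ∃ a : ℤ, ∀ i ≤ a, Φ i = ⊥)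
    (hexh : ∃ b : ℤ, ∀ i : ℤ, b ≤ i → Φ i = ⊤) (hstrict : IsStrictOn N Φ P) {m : ℕ}
    (hm : ∃ x ∈ P, (N ^ m) x ≠ 0) :
    ∃ i₀ : ℤ, ∃ e ∈ Φ i₀ ⊓ P, (N ^ m) e ∉ Φ (i₀ + m - 1) := by
  obtain ⟨a, ha⟩ := hsep
  obtain ⟨b, hb⟩ := hexh
  obtain ⟨i₀, ⟨e, he, hNe⟩, hmin⟩ := Int.exists_least_of_bdd
    (P := fun i => ∃ x ∈ Φ i ⊓ P, (N ^ m) x ≠ 0)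
    ⟨a + 1, fun i ⟨x, hx, hNx⟩ => by
      by_contra! hi
      rw [ha i (by omega), bot_inf_eq] at hx
      exact hNx (by rw [(Submodule.mem_bot K).mp hx, map_zero])⟩
    (by obtain ⟨x, hxP, hx⟩ := hm; exact ⟨b, x, by simpa [hb b le_rfl] using hxP, hx⟩)
  refine ⟨i₀, e, he, fun hmem => ?_⟩
  obtain ⟨y, hy, hye⟩ := hstrict m (i₀ - 1)
    ⟨Submodule.mem_map_of_mem he.2, show (N ^ m) e ∈ Φ (i₀ - 1 + m) by rwa [sub_add_eq_add_sub]⟩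
  have := hmin (i₀ - 1) ⟨y, hy, hye ▸ hNe⟩
  omega

theorem exists_isChainDual (hN : IsNilpotent N) (hsep : ∃ a : ℤ, ∀ i ≤ a, Φ i = ⊥)
    (hexh : ∃ b : ℤ, ∀ i : ℤ, b ≤ i → Φ i = ⊤) (hstrict : IsStrictOn N Φ P) (hP : P ≠ ⊥) :
    ∃ (χ : H →ₗ[K] K) (e : H) (i₀ : ℤ) (m : ℕ),
      IsChainDual N Φ χ e i₀ m ∧ e ∈ P ∧ ∀ x ∈ P, (N ^ (m + 1)) x = 0 := by
  obtain ⟨m, hPm, hm⟩ := exists_pow_succ_apply_eq_zero hN hP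
  obtain ⟨i₀, e, ⟨he, heP⟩, hNe⟩ := exists_mem_pow_apply_notMem hsep hexh hstrict hm
  obtain ⟨f, hf, hfΦ⟩ := Submodule.exists_dual_map_eq_bot_of_notMem hNe inferInstance
  refine ⟨(f ((N ^ m) e))⁻¹ • f, e, i₀, m, ⟨he, hPm e heP, ?_, fun x hx => ?_⟩, heP, hPm⟩
  · simp [inv_mul_cancel₀ hf]
  · simp [LinearMap.mem_ker.mp (LinearMap.le_ker_iff_map.mpr hfΦ hx)]

theorem exists_isCompatibleSplitting [FiniteDimensional K H] (hN : IsNilpotent N)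
    (hmono : Monotone Φ) (hsep : ∃ a : ℤ, ∀ i ≤ a, Φ i = ⊥)
    (hexh : ∃ b : ℤ, ∀ i : ℤ, b ≤ i → Φ i = ⊤) (hNΦ : ∀ i : ℤ, (Φ i).map N ≤ Φ (i + 1))
    (P : Submodule K H) (hP : ∀ x ∈ P, N x ∈ P) (hstrict : IsStrictOn N Φ P) :
    ∃ V : ℤ → Submodule K H, IsCompatibleSplitting N Φ P V := by
  induction P using WellFoundedLT.induction with
  | ind P ih =>
  by_cases hP0 : P = ⊥
  · subst hP0
    exact ⟨fun _ => ⊥, fun _ => bot_le, fun _ => by simp, fun _ => by simp,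
      fun _ => disjoint_bot_left⟩
  obtain ⟨χ, e, i₀, m, hc, heP, hPm⟩ := exists_isChainDual hN hsep hexh hstrict hP0
  have hπ := hc.isCompatibleProj_chainProj hmono hNΦ hP heP hPm
  have he : chainProj N χ e m e = e := by simpa using hc.chainProj_pow_apply hmono hNΦ 0
  have he0 : e ≠ 0 := by
    rintro rfl
    simpa using hc.apply_pow
  have hlt : P ⊓ LinearMap.ker (chainProj N χ e m) < P :=
    SetLike.lt_iff_le_and_exists.mpr
      ⟨inf_le_left, e, heP, fun h => he0 (he ▸ LinearMap.mem_ker.mp h.2)⟩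
  obtain ⟨V, hV⟩ := ih _ hlt (hπ.apply_mem_inf_ker hP) (hπ.isStrictOn_inf_ker hP hstrict)
  exact ⟨_, hπ.isCompatibleSplitting_sup hV (hc.isCompatibleSplitting_chainPiece hmono hNΦ)⟩

end Existence

theorem bijective_mkQ_comp_inclusion {R M : Type*} [Ring R] [AddCommGroup M] [Module R M]
    {p q r : Submodule R M} (hrq : r ≤ q) (hdisj : Disjoint r p) (hq : q ≤ p ⊔ r) :
    Function.Bijective ((p.comap q.subtype).mkQ ∘ₗ Submodule.inclusion hrq) := by
  constructor
  · rw [← LinearMap.ker_eq_bot, LinearMap.ker_comp, Submodule.ker_mkQ, eq_bot_iff]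
    intro x hx
    simpa using Submodule.disjoint_def.mp hdisj x x.2 hx
  · intro y
    obtain ⟨z, rfl⟩ := Submodule.Quotient.mk_surjective _ y
    obtain ⟨u, hu, v, hv, huv⟩ := Submodule.mem_sup.mp (hq z.2)
    refine ⟨⟨v, hv⟩, (Submodule.Quotient.eq _).mpr ?_⟩
    show v - (z : M) ∈ p
    rw [← huv, sub_add_cancel_right]
    exact neg_mem hu

section Graded

variable {K H : Type*} [Field K] [AddCommGroup H] [Module K H]
  {N : H →ₗ[K] H} {Φ : ℤ → Submodule K H} {V : ℤ → Submodule K H}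

namespace IsCompatibleSplitting

theorem iSup_le_eq (hV : IsCompatibleSplitting N Φ ⊤ V) (hmono : Monotone Φ)
    (hsep : ∃ a : ℤ, ∀ i ≤ a, Φ i = ⊥) (k : ℤ) : ⨆ i ≤ k, V i = Φ k := by
  refine le_antisymm (iSup₂_le fun i hi => ((hV.le i).trans inf_le_left).trans (hmono hi)) ?_
  obtain ⟨a, ha⟩ := hsep
  rcases lt_or_ge k a with hk | hk
  · rw [ha k hk.le]
    exact bot_le
  induction k, hk using Int.leInduction with
  | base => rw [ha a le_rfl]; exact bot_le
  | succ n _ ih =>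
    have h := hV.le_sup (n + 1)
    rw [inf_top_eq, add_sub_cancel_right] at h
    exact h.trans (sup_le (ih.trans (biSup_mono fun i hi => by omega)) (le_iSup₂ (f := fun i (_ : i ≤ n + 1) => V i) (n + 1) le_rfl))

theorem isInternal (hV : IsCompatibleSplitting N Φ ⊤ V) (hmono : Monotone Φ)
    (hsep : ∃ a : ℤ, ∀ i ≤ a, Φ i = ⊥) (hexh : ∃ b : ℤ, ∀ i : ℤ, b ≤ i → Φ i = ⊤) :
    DirectSum.IsInternal V := by
  refine (DirectSum.isInternal_submodule_iff_iSupIndep_and_iSup_eq_top V).mpr ⟨?_, ?_⟩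
  · refine iSupIndep_of_disjoint_iSup_lt fun i => (hV.disjoint i).mono_right ?_
    exact iSup₂_le fun j hj => ((hV.le j).trans inf_le_left).trans (hmono (by omega))
  · obtain ⟨b, hb⟩ := hexh
    rw [eq_top_iff, ← hb b le_rfl, ← hV.iSup_le_eq hmono hsep b]
    exact iSup₂_le fun i _ => le_iSup V i

noncomputable def pieceEquiv (hV : IsCompatibleSplitting N Φ ⊤ V) (i : ℤ) :
    V i ≃ₗ[K] GrPiece Φ i :=
  LinearEquiv.ofBijective _ (bijective_mkQ_comp_inclusion ((hV.le i).trans inf_le_left)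
    (hV.disjoint i) (by simpa using hV.le_sup i))

theorem grPieceMap_pieceEquiv (hV : IsCompatibleSplitting N Φ ⊤ V)
    (hNΦ : ∀ i : ℤ, (Φ i).map N ≤ Φ (i + 1)) (i : ℤ) (v : V i) :
    grPieceMap N Φ hNΦ i (hV.pieceEquiv i v) =
      hV.pieceEquiv (i + 1) ⟨N v, hV.map_le i (Submodule.mem_map_of_mem v.2)⟩ :=
  rfl

noncomputable def toGrMod (hV : IsCompatibleSplitting N Φ ⊤ V) (hint : DirectSum.IsInternal V) :
    H ≃ₗ[K] GrMod Φ :=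
  (LinearEquiv.ofBijective (DirectSum.coeLinearMap V) hint).symm ≪≫ₗ
    DFinsupp.mapRange.linearEquiv hV.pieceEquiv

theorem toGrMod_symm_lof (hV : IsCompatibleSplitting N Φ ⊤ V) (hint : DirectSum.IsInternal V)
    (i : ℤ) (y : GrPiece Φ i) :
    (hV.toGrMod hint).symm (DirectSum.lof K ℤ (GrPiece Φ) i y) = ((hV.pieceEquiv i).symm y : H) := by
  have hof : (LinearEquiv.ofBijective (DirectSum.coeLinearMap V) hint).symm
      ((hV.pieceEquiv i).symm y : H) = DirectSum.of (fun i => V i) i ((hV.pieceEquiv i).symm y) := by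
    rw [LinearEquiv.symm_apply_eq]
    exact (DirectSum.coeLinearMap_of V i _).symm
  rw [LinearEquiv.symm_apply_eq, toGrMod, LinearEquiv.trans_apply, hof,
    DFinsupp.mapRange.linearEquiv_apply, DirectSum.lof_eq_of]
  erw [DFinsupp.mapRange_single]
  rw [LinearEquiv.apply_symm_apply]
  rfl

theorem map_toGrMod_piece (hV : IsCompatibleSplitting N Φ ⊤ V) (hint : DirectSum.IsInternal V)
    (i : ℤ) : (V i).map (hV.toGrMod hint : H →ₗ[K] GrMod Φ) =
      LinearMap.range (DirectSum.lof K ℤ (GrPiece Φ) i) := by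
  have hcomp : (hV.toGrMod hint).symm.toLinearMap ∘ₗ DirectSum.lof K ℤ (GrPiece Φ) i =
      (V i).subtype ∘ₗ (hV.pieceEquiv i).symm.toLinearMap :=
    LinearMap.ext (hV.toGrMod_symm_lof hint i)
  rw [← Submodule.map_symm_eq_iff, ← LinearMap.range_comp, hcomp,
    LinearMap.range_comp_of_range_eq_top _ (LinearEquiv.range _), Submodule.range_subtype]

theorem map_toGrMod (hV : IsCompatibleSplitting N Φ ⊤ V) (hint : DirectSum.IsInternal V)
    (hmono : Monotone Φ) (hsep : ∃ a : ℤ, ∀ i ≤ a, Φ i = ⊥) (k : ℤ) :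
    (Φ k).map (hV.toGrMod hint : H →ₗ[K] GrMod Φ) =
      ⨆ i ≤ k, LinearMap.range (DirectSum.lof K ℤ (GrPiece Φ) i) := by
  simp_rw [← hV.iSup_le_eq hmono hsep k, Submodule.map_iSup, hV.map_toGrMod_piece hint]

theorem toGrMod_comp (hV : IsCompatibleSplitting N Φ ⊤ V) (hint : DirectSum.IsInternal V)
    (hNΦ : ∀ i : ℤ, (Φ i).map N ≤ Φ (i + 1)) :
    (hV.toGrMod hint : H →ₗ[K] GrMod Φ).comp N =
      (grN N Φ hNΦ).comp (hV.toGrMod hint : H →ₗ[K] GrMod Φ) := by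
  have h : N ∘ₗ (hV.toGrMod hint).symm.toLinearMap =
      (hV.toGrMod hint).symm.toLinearMap ∘ₗ grN N Φ hNΦ := by
    refine DirectSum.linearMap_ext K fun i => LinearMap.ext fun y => ?_
    obtain ⟨v, rfl⟩ := (hV.pieceEquiv i).surjective y
    simp [grN, hV.toGrMod_symm_lof hint, hV.grPieceMap_pieceEquiv hNΦ]
  refine LinearMap.ext fun x => (hV.toGrMod hint).symm.injective ?_
  simpa using LinearMap.congr_fun h (hV.toGrMod hint x)

end IsCompatibleSplitting

end Graded

/-- **Filtered isomorphism with the associated graded** (M. Saito,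
Proposition 3.7; consequence).  Under the strictness hypothesis there is a
linear isomorphism `ψ : H ≃ Gr^Φ H` with `ψ (Φ k) = ⊕_{i ≤ k} Φ i / Φ (i-1)`
for all `k` and `ψ ∘ N = Gr(N) ∘ ψ`. -/
theorem exists_graded_iso_of_strict_nilpotent
    {K H : Type*} [Field K] [AddCommGroup H] [Module K H]
    [FiniteDimensional K H]
    (N : H →ₗ[K] H) (hN : IsNilpotent N)
    (Φ : ℤ → Submodule K H) (hmono : Monotone Φ)
    (hsep : ∃ a : ℤ, ∀ i ≤ a, Φ i = ⊥)
    (hexh : ∃ b : ℤ, ∀ i : ℤ, b ≤ i → Φ i = ⊤)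
    (hNΦ : ∀ i : ℤ, (Φ i).map N ≤ Φ (i + 1))
    (hstrict : ∀ j : ℕ, ∀ i : ℤ,
      LinearMap.range (N ^ j) ⊓ Φ (i + j) = (Φ i).map (N ^ j)) :
    ∃ ψ : H ≃ₗ[K] GrMod Φ,
      (∀ k : ℤ, (Φ k).map (ψ : H →ₗ[K] GrMod Φ) =
        ⨆ i ≤ k, LinearMap.range (DirectSum.lof K ℤ (GrPiece Φ) i)) ∧
      (ψ : H →ₗ[K] GrMod Φ).comp N =
        (grN N Φ hNΦ).comp (ψ : H →ₗ[K] GrMod Φ) := by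
  have hstrictTop : IsStrictOn N Φ ⊤ := fun j i => by
    rw [Submodule.map_top, inf_top_eq, hstrict j i]
  obtain ⟨V, hV⟩ := exists_isCompatibleSplitting hN hmono hsep hexh hNΦ ⊤
    (fun _ _ => Submodule.mem_top) hstrictTop
  have hint := hV.isInternal hmono hsep hexh
  exact ⟨hV.toGrMod hint, hV.map_toGrMod hint hmono hsep, hV.toGrMod_comp hint hNΦ⟩
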